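/- arXiv:1506.02695 — 2 statements merged into one kernel-verified Lean document; each statement's English description precedes it below -/
import Mathlib

section
/- Let G be a finite nilpotent group. Then rank(G) = rank(G/G'), and consequently rank(G^n) = n · rank(G) for all positive integers n. -/
/-!
Write `K_q = G' G^q`. In a finite nilpotent group every maximal subgroup is normal of prime
index `q`, so it contains `K_q`; hence a subgroup `H` with `H K_q = G` for every prime `q` is all
of `G`, and generators of `G/G'` lift to generators of `G`. Each `G/K_q` is an elementary abelian
`q`-group, so `|G/K_q| = q ^ rank (G/K_q)`: these orders are pairwise coprime, `G` maps onto the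
product of the `G/K_q`, and so `rank G ≤ max_q rank (G/K_q)`. Finally `G^n` maps onto
`(G/K_q)^n`, whose rank is `n · rank (G/K_q)`, which gives `n · rank G ≤ rank (G^n)`.
-/

open Subgroup

/-- Minimal length of a word over `X` (positive letters only) representing `g`. -/
noncomputable def wLen {G : Type*} [Group G] (X : Set G) (g : G) : ℕ :=
  sInf {n | ∃ l : List G, (∀ x ∈ l, x ∈ X) ∧ l.length = n ∧ l.prod = g}

/-- Minimal length of a word over `X ∪ X⁻¹` representing `g`. -/
noncomputable def sLen {G : Type*} [Group G] (X : Set G) (g : G) : ℕ :=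
  sInf {n | ∃ l : List G, (∀ x ∈ l, x ∈ X ∨ x⁻¹ ∈ X) ∧ l.length = n ∧ l.prod = g}

/-- Diameter of `G` with respect to `X` (positive words). -/
noncomputable def diamW (G : Type*) [Group G] (X : Set G) : ℕ :=
  sSup (Set.range (wLen X))

/-- Symmetric diameter of `G` with respect to `X`. -/
noncomputable def diamS (G : Type*) [Group G] (X : Set G) : ℕ :=
  sSup (Set.range (sLen X))

/-- Maximum diameter over all generating sets. -/
noncomputable def DW (G : Type*) [Group G] : ℕ :=
  sSup {d | ∃ X : Set G, Subgroup.closure X = ⊤ ∧ d = diamW G X}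

/-- Maximum symmetric diameter over all generating sets. -/
noncomputable def DS (G : Type*) [Group G] : ℕ :=
  sSup {d | ∃ X : Set G, Subgroup.closure X = ⊤ ∧ d = diamS G X}

/-- Minimal size of a generating set of `G`. -/
noncomputable def rk (G : Type*) [Group G] : ℕ :=
  sInf {n | ∃ S : Finset G, S.card = n ∧ Subgroup.closure (S : Set G) = ⊤}

theorem rk_eq_rank (G : Type*) [Group G] [Group.FG G] : rk G = Group.rank G := by
  obtain ⟨S, hS, hgen⟩ := Group.rank_spec G
  exact le_antisymm (Nat.sInf_le ⟨S, hS, hgen⟩)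
    (le_csInf ⟨_, S, hS, hgen⟩ fun _ ⟨T, hT, hgen⟩ => hT ▸ Group.rank_le hgen)

theorem AddGroup.rank_additive (G : Type*) [Group G] [Group.FG G] :
    AddGroup.rank (Additive G) = Group.rank G := by
  have key (S : Finset G) :
      AddSubgroup.closure (Additive.toMul ⁻¹' (S : Set G)) = ⊤ ↔ closure (S : Set G) = ⊤ := by
    rw [← Subgroup.toAddSubgroup_closure, map_eq_top_iff]
  refine le_antisymm ?_ ?_
  · obtain ⟨S, hS, hgen⟩ := Group.rank_spec G
    exact hS ▸ AddGroup.rank_le (S := show Finset (Additive G) from S) ((key S).mpr hgen)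
  · obtain ⟨S, hS, hgen⟩ := AddGroup.rank_spec (Additive G)
    exact hS ▸ Group.rank_le (S := show Finset G from S) ((key S).mp hgen)

section ZModModule

variable {V : Type*} [AddCommGroup V]

theorem AddSubgroup.closure_eq_top_iff_span_zmod_eq_top {n : ℕ} [Module (ZMod n) V] (s : Set V) :
    AddSubgroup.closure s = ⊤ ↔ Submodule.span (ZMod n) s = ⊤ := by
  have hle : Submodule.span (ZMod n) s ≤ AddSubgroup.toZModSubmodule n (AddSubgroup.closure s) :=
    Submodule.span_le.mpr AddSubgroup.subset_closure
  have : (Submodule.span (ZMod n) s).toAddSubgroup = AddSubgroup.closure s :=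
    le_antisymm (fun _ hx => hle hx) ((AddSubgroup.closure_le _).mpr Submodule.subset_span)
  rw [← this, Submodule.toAddSubgroup_eq_top]

theorem AddGroup.rank_eq_finrank_zmod {p : ℕ} [Fact p.Prime] [Module (ZMod p) V] [Finite V] :
    AddGroup.rank V = Module.finrank (ZMod p) V := by
  classical
  refine le_antisymm ?_ ?_
  · let b := Module.finBasis (ZMod p) V
    calc AddGroup.rank V ≤ (Finset.univ.image b).card := AddGroup.rank_le <| by
          rw [AddSubgroup.closure_eq_top_iff_span_zmod_eq_top (n := p), Finset.coe_image,
            Finset.coe_univ, Set.image_univ, b.span_eq]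
      _ ≤ _ := Finset.card_image_le.trans_eq (by simp)
  · obtain ⟨S, hS, hgen⟩ := AddGroup.rank_spec V
    rw [AddSubgroup.closure_eq_top_iff_span_zmod_eq_top (n := p)] at hgen
    rw [← hS, ← finrank_top, ← hgen]
    exact finrank_span_finset_le_card S

end ZModModule

section ElementaryAbelian

open scoped IsMulCommutative

variable {p : ℕ} [hp : Fact p.Prime] {W : Type*} [Group W] [IsMulCommutative W] [Finite W]

theorem card_eq_pow_rank_of_pow_eq_one (hpow : ∀ x : W, x ^ p = 1) :
    Nat.card W = p ^ Group.rank W := by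
  let _ : Module (ZMod p) (Additive W) := AddCommGroup.zmodModule fun x => hpow x.toMul
  rw [← AddGroup.rank_additive, AddGroup.rank_eq_finrank_zmod (p := p)]
  calc Nat.card (Additive W) = Nat.card (ZMod p) ^ Module.finrank (ZMod p) (Additive W) :=
        @Module.natCard_eq_pow_finrank _ _ _ _ _ Module.Finite.of_finite
    _ = _ := by rw [Nat.card_zmod]

theorem rank_pi_eq_of_pow_eq_one (hpow : ∀ x : W, x ^ p = 1) (n : ℕ) :
    Group.rank (Fin n → W) = n * Group.rank W := by
  refine Nat.pow_right_injective hp.out.two_le ?_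
  dsimp only
  rw [← card_eq_pow_rank_of_pow_eq_one (fun x => funext fun i => hpow (x i)), Nat.card_pi,
    Finset.prod_const, card_eq_pow_rank_of_pow_eq_one hpow, ← pow_mul, Finset.card_univ,
    Fintype.card_fin, mul_comm]

end ElementaryAbelian

section Rank

variable {G : Type*} [Group G]

theorem sup_eq_top_of_map_mk_eq_top {N : Subgroup G} [N.Normal] {H : Subgroup G}
    (h : H.map (QuotientGroup.mk' N) = ⊤) : H ⊔ N = ⊤ := by
  rw [← QuotientGroup.ker_mk' N, ← comap_map_eq, h, comap_top]

theorem Group.rank_le_rank_quotient [Group.FG G] (N : Subgroup G) [N.Normal]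
    (hN : ∀ H : Subgroup G, H ⊔ N = ⊤ → H = ⊤) : Group.rank G ≤ Group.rank (G ⧸ N) := by
  classical
  obtain ⟨S, hS, hgen⟩ := Group.rank_spec (G ⧸ N)
  calc Group.rank G ≤ (S.image Quotient.out).card := Group.rank_le <| hN _ <|
        sup_eq_top_of_map_mk_eq_top <| by
          rw [MonoidHom.map_closure, Finset.coe_image, Set.image_image]
          simpa using hgen
    _ ≤ Group.rank (G ⧸ N) := hS ▸ Finset.card_image_le

theorem Group.rank_pi_le [Group.FG G] (ι : Type*) [Fintype ι] :
    Group.rank (ι → G) ≤ Fintype.card ι * Group.rank G := by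
  classical
  obtain ⟨S, hS, hgen⟩ := Group.rank_spec G
  let T : Finset (ι → G) := (Finset.univ ×ˢ S).image fun x => Pi.mulSingle x.1 x.2
  have hT : closure (T : Set (ι → G)) = ⊤ := by
    refine eq_top_iff.mpr fun x _ => pi_mem_of_mulSingle_mem x fun i => ?_
    have : closure (S : Set G) ≤ (closure (T : Set (ι → G))).comap (MonoidHom.mulSingle _ i) :=
      closure_le _ |>.mpr fun s hs => subset_closure <| by simpa [T] using ⟨i, s, hs, rfl⟩
    exact this (hgen ▸ mem_top (x i))
  calc Group.rank (ι → G) ≤ T.card := Group.rank_le hT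
    _ ≤ (Finset.univ ×ˢ S).card := Finset.card_image_le
    _ = Fintype.card ι * Group.rank G := by rw [Finset.card_product, hS, Finset.card_univ]

theorem Group.exists_closure_range_eq_top_of_rank_le [Group.FG G] {D : ℕ}
    (h : Group.rank G ≤ D) : ∃ b : Fin D → G, closure (Set.range b) = ⊤ := by
  classical
  obtain ⟨S, hS, hgen⟩ := Group.rank_spec G
  refine ⟨fun j => S.toList.getD j 1, eq_top_iff.mpr (hgen ▸ closure_mono fun s hs => ?_)⟩
  obtain ⟨i, hi, rfl⟩ := List.mem_iff_getElem.mp (Finset.mem_toList.mpr hs)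
  have : i < D := (S.length_toList ▸ hi).trans_le (hS ▸ h)
  exact ⟨⟨i, this⟩, List.getD_eq_getElem _ _ hi⟩

theorem MonoidHom.surjective_pi_of_coprime {ι : Type*} [Fintype ι] {W : ι → Type*}
    [∀ i, Group (W i)] [∀ i, Finite (W i)]
    (hcop : Pairwise fun i j => (Nat.card (W i)).Coprime (Nat.card (W j)))
    (f : G →* ∀ i, W i) (hf : ∀ i, Function.Surjective fun g => f g i) :
    Function.Surjective f := by
  have hdvd (i : ι) : Nat.card (W i) ∣ Nat.card f.range := by
    refine card_dvd_of_surjective ((Pi.evalMonoidHom W i).comp f.range.subtype) fun w => ?_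
    obtain ⟨g, rfl⟩ := hf i w
    exact ⟨⟨f g, g, rfl⟩, rfl⟩
  have : Nat.card (∀ i, W i) ∣ Nat.card f.range := by
    rw [Nat.card_pi, ← Int.natCast_dvd_natCast, Nat.cast_prod]
    exact Fintype.prod_dvd_of_coprime (fun i j hij => Nat.isCoprime_iff_coprime.mpr (hcop hij))
      fun i => Int.natCast_dvd_natCast.mpr (hdvd i)
  exact MonoidHom.range_eq_top.mp (eq_top_of_le_card _ (Nat.le_of_dvd Nat.card_pos this))

end Rank

theorem prime_card_of_isSimpleOrder_subgroup {Q : Type*} [Group Q] [Finite Q]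
    [IsSimpleOrder (Subgroup Q)] : (Nat.card Q).Prime := by
  have : Nontrivial Q := Subgroup.nontrivial_iff.mp inferInstance
  obtain ⟨x, hx⟩ := exists_ne (1 : Q)
  have : zpowers x = ⊤ := (eq_bot_or_eq_top _).resolve_left (by simpa using hx)
  have : IsCyclic Q := isCyclic_iff_exists_zpowers_eq_top.mpr ⟨x, this⟩
  exact Group.is_simple_iff_prime_card.mp ⟨fun H _ => eq_bot_or_eq_top H⟩

def powCommutator (G : Type*) [Group G] (p : ℕ) : Subgroup G :=
  commutator G ⊔ normalClosure (Set.range fun g : G => g ^ p)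

namespace powCommutator

open scoped commutatorElement

variable {G : Type*} [Group G] (p : ℕ)

instance : (powCommutator G p).Normal := by
  unfold powCommutator; infer_instance

instance : IsMulCommutative (G ⧸ powCommutator G p) := .of_comm fun a b => by
  induction a using QuotientGroup.induction_on with | H a => ?_
  induction b using QuotientGroup.induction_on with | H b => ?_
  rw [← QuotientGroup.mk_mul, ← QuotientGroup.mk_mul, QuotientGroup.eq]
  have : ⁅b⁻¹, a⁻¹⁆ ∈ powCommutator G p :=
    le_sup_left (α := Subgroup G) (commutator_mem_commutator (mem_top b⁻¹) (mem_top a⁻¹))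
  convert this using 1
  group

theorem pow_eq_one (x : G ⧸ powCommutator G p) : x ^ p = 1 := by
  induction x using QuotientGroup.induction_on with | H g => ?_
  rw [← QuotientGroup.mk_pow, QuotientGroup.eq_one_iff]
  exact le_sup_right (α := Subgroup G) (subset_normalClosure ⟨g, rfl⟩)

theorem coprime_card_quotient [Finite G] {q r : ℕ} (hq : q.Prime) (hr : r.Prime) (hqr : q ≠ r) :
    (Nat.card (G ⧸ powCommutator G q)).Coprime (Nat.card (G ⧸ powCommutator G r)) := by
  have : Fact q.Prime := ⟨hq⟩
  have : Fact r.Prime := ⟨hr⟩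
  rw [card_eq_pow_rank_of_pow_eq_one (pow_eq_one q), card_eq_pow_rank_of_pow_eq_one (pow_eq_one r)]
  exact Nat.coprime_pow_primes _ _ hq hr hqr

open scoped IsMulCommutative in
theorem le_of_quotient {N : Subgroup G} [N.Normal] [IsMulCommutative (G ⧸ N)]
    (hpow : ∀ x : G ⧸ N, x ^ p = 1) : powCommutator G p ≤ N := by
  refine sup_le ?_ (normalClosure_le_normal ?_)
  · simpa using Abelianization.commutator_subset_ker (QuotientGroup.mk' N)
  · rintro _ ⟨g, rfl⟩
    rw [SetLike.mem_coe, ← QuotientGroup.eq_one_iff, QuotientGroup.mk_pow, hpow]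

end powCommutator

section Nilpotent

variable {G : Type*} [Group G] [Finite G] [Group.IsNilpotent G]

theorem exists_prime_powCommutator_le_of_isCoatom {M : Subgroup G} (hM : IsCoatom M) :
    ∃ q, q.Prime ∧ q ∣ Nat.card G ∧ powCommutator G q ≤ M := by
  have : M.Normal := Group.normalizerCondition_of_isNilpotent.normal_of_coatom M hM
  have : IsSimpleOrder (Subgroup (G ⧸ M)) :=
    have e : Subgroup (G ⧸ M) ≃o Set.Ici M := QuotientGroup.comapMk'OrderIso M
    e.isSimpleOrder_iff.mpr (Set.isSimpleOrder_Ici_iff_isCoatom.mpr hM)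
  have hq := prime_card_of_isSimpleOrder_subgroup (Q := G ⧸ M)
  have : IsCyclic (G ⧸ M) := isCyclic_of_prime_card (hp := ⟨hq⟩) rfl
  exact ⟨_, hq, M.card_quotient_dvd_card, powCommutator.le_of_quotient _ fun _ => pow_card_eq_one'⟩

theorem eq_top_of_forall_sup_powCommutator_eq_top {H : Subgroup G}
    (h : ∀ q, q.Prime → q ∣ Nat.card G → H ⊔ powCommutator G q = ⊤) : H = ⊤ := by
  by_contra hH
  obtain ⟨M, hM, hHM⟩ := (eq_top_or_exists_le_coatom H).resolve_left hH
  obtain ⟨q, hq, hqG, hqM⟩ := exists_prime_powCommutator_le_of_isCoatom hM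
  exact hM.1 (top_le_iff.mp (h q hq hqG ▸ sup_le hHM hqM))

theorem Group.rank_quotient_commutator :
    Group.rank (G ⧸ commutator G) = Group.rank G :=
  le_antisymm (Group.rank_le_of_surjective _ (QuotientGroup.mk'_surjective _)) <|
    Group.rank_le_rank_quotient _ fun H hH => eq_top_of_forall_sup_powCommutator_eq_top
      fun _ _ _ => top_le_iff.mp (hH ▸ sup_le_sup_left le_sup_left H)

theorem Group.rank_le_of_forall_rank_quotient_powCommutator_le {D : ℕ}
    (h : ∀ q, q.Prime → q ∣ Nat.card G → Group.rank (G ⧸ powCommutator G q) ≤ D) :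
    Group.rank G ≤ D := by
  classical
  let P := (Nat.card G).primeFactors
  have hb (q : P) : ∃ b : Fin D → G ⧸ powCommutator G q, closure (Set.range b) = ⊤ :=
    Group.exists_closure_range_eq_top_of_rank_le <|
      h q (Nat.prime_of_mem_primeFactors q.2) (Nat.dvd_of_mem_primeFactors q.2)
  choose b hb using hb
  let φ : G →* ∀ q : P, G ⧸ powCommutator G q := MonoidHom.pi fun q => QuotientGroup.mk' _
  have hφ : Function.Surjective φ :=
    φ.surjective_pi_of_coprime
      (fun q r hqr => powCommutator.coprime_card_quotient (Nat.prime_of_mem_primeFactors q.2)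
        (Nat.prime_of_mem_primeFactors r.2) (Subtype.coe_injective.ne hqr))
      fun q => QuotientGroup.mk'_surjective _
  choose g hg using fun j => hφ fun q => b q j
  have hgen : closure (Finset.univ.image g : Set G) = ⊤ := by
    refine eq_top_of_forall_sup_powCommutator_eq_top fun q hq hqG => ?_
    have hqP : q ∈ P := Nat.mem_primeFactors.mpr ⟨hq, hqG, Nat.card_pos.ne'⟩
    refine sup_eq_top_of_map_mk_eq_top ?_
    rw [MonoidHom.map_closure, ← hb ⟨q, hqP⟩, Finset.coe_image, Finset.coe_univ, Set.image_univ,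
      ← Set.range_comp]
    exact congrArg (Subgroup.closure ∘ Set.range) (funext fun j => congrFun (hg j) ⟨q, hqP⟩)
  calc Group.rank G ≤ (Finset.univ.image g).card := Group.rank_le hgen
    _ ≤ D := Finset.card_image_le.trans_eq (by simp)

end Nilpotent

theorem stmt5 {G : Type*} [Group G] [Fintype G] [Group.IsNilpotent G] :
    rk G = rk (G ⧸ commutator G) ∧
      ∀ n : ℕ, 0 < n → rk (Fin n → G) = n * rk G := by
  simp only [rk_eq_rank]
  refine ⟨Group.rank_quotient_commutator.symm, fun n hn => le_antisymm ?_ ?_⟩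
  · simpa using Group.rank_pi_le (G := G) (Fin n)
  · -- bound `rank G` by `rank (G^n) / n`, one prime `q` at a time
    rw [mul_comm, ← Nat.le_div_iff_mul_le hn]
    refine Group.rank_le_of_forall_rank_quotient_powCommutator_le fun q hq _ => ?_
    have : Fact q.Prime := ⟨hq⟩
    rw [Nat.le_div_iff_mul_le hn, mul_comm, ← rank_pi_eq_of_pow_eq_one (powCommutator.pow_eq_one q)]
    exact Group.rank_le_of_surjective (MonoidHom.compLeft (QuotientGroup.mk' _) (Fin n))
      (QuotientGroup.mk'_surjective _).comp_left
end

section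
/- Let G be a finite group with nontrivial proper normal subgroup H. Then for every n ≥ 1, D(G^n) ≤ D(G^n/H^n) + (1 + |G| · D(G^n/H^n)) · D(H^n). -/
open Subgroup

/-! Let `X` generate `K`. Lifting shortest words over the image of `X` in `K ⧸ N` gives a
transversal of `N` whose elements have `X`-length at most `D(K ⧸ N)`, with `N` represented
by `1`. By Schreier's lemma the elements `r x u⁻¹` (`r`, `u` representatives, `x ∈ X`)
generate `N`, and since `u⁻¹ = u ^ (o(u) - 1)` each of them has `X`-length at most
`1 + c D(K ⧸ N)`, where `c` bounds the element orders. Hence every element of `N` has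
`X`-length at most `(1 + c D(K ⧸ N)) D(N)`, and writing `g = h u` with `h ∈ N` gives the
bound. -/

section WordLength

variable {K : Type*} [Group K] {X : Set K}

theorem wLen_prod_le_length {l : List K} (hl : ∀ x ∈ l, x ∈ X) : wLen X l.prod ≤ l.length :=
  Nat.sInf_le ⟨l, hl, rfl, rfl⟩

theorem wLen_one : wLen X 1 = 0 :=
  Nat.le_zero.1 (wLen_prod_le_length (l := []) (by simp))

theorem wLen_le_one_of_mem {x : K} (hx : x ∈ X) : wLen X x ≤ 1 := by
  simpa using wLen_prod_le_length (l := [x]) (by simpa using hx)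

theorem exists_list_length_eq_wLen (hX : Submonoid.closure X = ⊤) (g : K) :
    ∃ l : List K, (∀ x ∈ l, x ∈ X) ∧ l.length = wLen X g ∧ l.prod = g := by
  obtain ⟨l, hl, rfl⟩ := Submonoid.exists_list_of_mem_closure (hX ▸ Submonoid.mem_top g)
  exact Nat.sInf_mem
    (s := {n | ∃ m : List K, (∀ x ∈ m, x ∈ X) ∧ m.length = n ∧ m.prod = l.prod})
    ⟨l.length, l, hl, rfl, rfl⟩

theorem wLen_mul_le (hX : Submonoid.closure X = ⊤) (g h : K) :
    wLen X (g * h) ≤ wLen X g + wLen X h := by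
  obtain ⟨l, hl, hl_len, rfl⟩ := exists_list_length_eq_wLen hX g
  obtain ⟨m, hm, hm_len, rfl⟩ := exists_list_length_eq_wLen hX h
  rw [← hl_len, ← hm_len, ← List.length_append, ← List.prod_append]
  exact wLen_prod_le_length fun x hx => (List.mem_append.1 hx).elim (hl x) (hm x)

theorem wLen_list_prod_le (hX : Submonoid.closure X = ⊤) (l : List K) :
    wLen X l.prod ≤ (l.map (wLen X)).sum := by
  induction l with
  | nil => simp [wLen_one]
  | cons g l ih =>
    simpa only [List.prod_cons, List.map_cons, List.sum_cons] using
      (wLen_mul_le hX g l.prod).trans (Nat.add_le_add_left ih _)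

theorem wLen_pow_le (hX : Submonoid.closure X = ⊤) (g : K) (m : ℕ) :
    wLen X (g ^ m) ≤ m * wLen X g := by
  simpa [List.sum_replicate] using wLen_list_prod_le hX (List.replicate m g)

theorem wLen_inv_le (hX : Submonoid.closure X = ⊤) {g : K} (hg : IsOfFinOrder g) :
    wLen X g⁻¹ ≤ (orderOf g - 1) * wLen X g := by
  have : g⁻¹ = g ^ (orderOf g - 1) := by
    refine (eq_inv_of_mul_eq_one_left ?_).symm
    rw [← pow_succ, Nat.sub_add_cancel hg.orderOf_pos, pow_orderOf_eq_one]
  exact this ▸ wLen_pow_le hX g _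

theorem eq_one_of_wLen_eq_zero (hX : Submonoid.closure X = ⊤) {g : K} (hg : wLen X g = 0) :
    g = 1 := by
  obtain ⟨l, -, hl_len, rfl⟩ := exists_list_length_eq_wLen hX g
  rw [List.length_eq_zero_iff.1 (hl_len.trans hg), List.prod_nil]

theorem wLen_map_le_mul {L : Type*} [Group L] {Y : Set L} (hX : Submonoid.closure X = ⊤)
    (hY : Submonoid.closure Y = ⊤) (φ : L →* K) {B : ℕ} (hB : ∀ y ∈ Y, wLen X (φ y) ≤ B)
    (h : L) : wLen X (φ h) ≤ B * wLen Y h := by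
  obtain ⟨l, hl, hl_len, rfl⟩ := exists_list_length_eq_wLen hY h
  calc wLen X (φ l.prod) = wLen X (l.map φ).prod := by rw [map_list_prod]
    _ ≤ ((l.map φ).map (wLen X)).sum := wLen_list_prod_le hX _
    _ ≤ ((l.map φ).map (wLen X)).length • B :=
        List.sum_le_card_nsmul _ B (by simpa using fun y hy => hB y (hl y hy))
    _ = B * wLen Y l.prod := by rw [List.length_map, List.length_map, hl_len, smul_eq_mul, mul_comm]

theorem exists_map_eq_wLen_le {Q : Type*} [Group Q] (f : K →* Q)
    (hfX : Submonoid.closure (f '' X) = ⊤) (q : Q) :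
    ∃ g, f g = q ∧ wLen X g ≤ wLen (f '' X) q := by
  obtain ⟨l, hl, hl_len, rfl⟩ := exists_list_length_eq_wLen hfX q
  refine ⟨(l.map (Function.invFunOn f X)).prod, ?_, ?_⟩
  · rw [map_list_prod, List.map_map]
    conv_rhs => rw [← List.map_id l]
    exact congrArg List.prod (List.map_congr_left fun y hy => Function.invFunOn_eq (hl y hy))
  · rw [← hl_len, ← List.length_map (f := Function.invFunOn f X)]
    exact wLen_prod_le_length (by simpa using fun y hy => Function.invFunOn_mem (hl y hy))

theorem isComplement_range_of_normal {N : Subgroup K} [N.Normal]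
    {f : K ⧸ N → K} (hf : ∀ q, QuotientGroup.mk' N (f q) = q) :
    IsComplement N (Set.range f) := by
  rw [isComplement_iff_existsUnique_mul_inv_mem]
  intro g
  refine ⟨⟨f g, g, rfl⟩, ?_, ?_⟩
  · change g * (f g)⁻¹ ∈ N
    rw [← div_eq_mul_inv, ← QuotientGroup.eq_iff_div_mem]
    exact (hf g).symm
  · rintro ⟨-, q, rfl⟩ hq
    rw [SetLike.mem_coe, ← div_eq_mul_inv, ← QuotientGroup.eq_iff_div_mem] at hq
    exact Subtype.ext (congrArg f ((hf q).symm.trans hq.symm))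

theorem exists_isComplement_forall_wLen_le (N : Subgroup K) [N.Normal]
    (hX : Submonoid.closure X = ⊤) :
    ∃ R : Set K, IsComplement N R ∧ (1 : K) ∈ R ∧
      ∀ r ∈ R, wLen X r ≤ wLen (QuotientGroup.mk' N '' X) (r : K ⧸ N) := by
  have hX' : Submonoid.closure (QuotientGroup.mk' N '' X) = ⊤ := by
    rw [← MonoidHom.map_mclosure, hX, ← MonoidHom.mrange_eq_map,
      MonoidHom.mrange_eq_top_of_surjective _ (QuotientGroup.mk'_surjective N)]
  choose f hf hf_len using exists_map_eq_wLen_le (QuotientGroup.mk' N) hX'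
  refine ⟨Set.range f, isComplement_range_of_normal hf, ⟨1, ?_⟩, ?_⟩
  · exact eq_one_of_wLen_eq_zero hX (Nat.le_zero.1 ((hf_len 1).trans_eq wLen_one))
  · rintro - ⟨q, rfl⟩
    rw [show ((f q : K) : K ⧸ N) = q from hf q]
    exact hf_len q

end WordLength

theorem Submonoid.closure_eq_top_of_subgroupClosure_eq_top {K : Type*} [Group K] [Finite K]
    {X : Set K} (hX : Subgroup.closure X = ⊤) : Submonoid.closure X = ⊤ := by
  rw [← Subgroup.closure_toSubmonoid_of_finite, hX, Subgroup.top_toSubmonoid]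

section Diameter

open scoped Pointwise

variable {K : Type*} [Group K]

theorem wLen_le_DW [Finite K] {X : Set K} (hX : Subgroup.closure X = ⊤) (g : K) :
    wLen X g ≤ DW K := by
  have hdiam : wLen X g ≤ diamW K X :=
    le_csSup (Set.finite_range _).bddAbove (Set.mem_range_self g)
  refine hdiam.trans (le_csSup ?_ ⟨X, hX, rfl⟩)
  refine ((Set.finite_range (diamW K)).subset ?_).bddAbove
  rintro d ⟨X, -, rfl⟩
  exact ⟨X, rfl⟩

theorem DW_le_of_forall_wLen_le {B : ℕ}
    (h : ∀ X : Set K, Subgroup.closure X = ⊤ → ∀ g, wLen X g ≤ B) : DW K ≤ B := by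
  refine csSup_le ⟨_, Set.univ, Subgroup.closure_univ, rfl⟩ ?_
  rintro - ⟨X, hX, rfl⟩
  refine csSup_le (Set.range_nonempty _) ?_
  rintro - ⟨g, rfl⟩
  exact h X hX g

theorem wLen_mul_mul_inv_le {X : Set K} (hX : Submonoid.closure X = ⊤) {r x u : K} (hx : x ∈ X)
    (hu : IsOfFinOrder u) {c D : ℕ} (hc : orderOf u ≤ c) (hr : wLen X r ≤ D)
    (hu_len : wLen X u ≤ D) : wLen X (r * x * u⁻¹) ≤ 1 + c * D := by
  have hinv : (orderOf u - 1) * D + D ≤ c * D := by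
    rw [← Nat.succ_mul, Nat.succ_eq_add_one, Nat.sub_add_cancel hu.orderOf_pos]
    exact Nat.mul_le_mul_right D hc
  calc wLen X (r * x * u⁻¹) ≤ wLen X r + wLen X x + wLen X u⁻¹ :=
        (wLen_mul_le hX _ _).trans (Nat.add_le_add_right (wLen_mul_le hX _ _) _)
    _ ≤ D + 1 + (orderOf u - 1) * D := by
        gcongr
        · exact wLen_le_one_of_mem hx
        · exact (wLen_inv_le hX hu).trans (Nat.mul_le_mul_left _ hu_len)
    _ ≤ 1 + c * D := by omega

theorem DW_le_of_normal [Finite K] (N : Subgroup K) [N.Normal] {c : ℕ}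
    (horder : ∀ t : K, orderOf t ≤ c) :
    DW K ≤ DW (K ⧸ N) + (1 + c * DW (K ⧸ N)) * DW N := by
  refine DW_le_of_forall_wLen_le fun X hX g => ?_
  have hXm := Submonoid.closure_eq_top_of_subgroupClosure_eq_top hX
  have hXq : Subgroup.closure (QuotientGroup.mk' N '' X) = ⊤ := by
    rw [← MonoidHom.map_closure, hX,
      Subgroup.map_top_of_surjective _ (QuotientGroup.mk'_surjective N)]
  obtain ⟨R, hR, hR1, hR_len⟩ := exists_isComplement_forall_wLen_le N hXm
  have hR_le_DW : ∀ r ∈ R, wLen X r ≤ DW (K ⧸ N) :=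
    fun r hr => (hR_len r hr).trans (wLen_le_DW hXq _)
  set Y : Set N :=
    (R * X).image fun g => ⟨g * (hR.toRightFun g : K)⁻¹, hR.mul_inv_toRightFun_mem g⟩
  have hY : Subgroup.closure Y = ⊤ := closure_mul_image_eq_top hR hR1 hX
  have hY_len : ∀ y ∈ Y, wLen X (N.subtype y) ≤ 1 + c * DW (K ⧸ N) := by
    rintro - ⟨-, ⟨r, hr, x, hx, rfl⟩, rfl⟩
    exact wLen_mul_mul_inv_le hXm hx (isOfFinOrder_of_finite _) (horder _) (hR_le_DW r hr)
      (hR_le_DW _ (hR.toRightFun _).2)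
  set u := hR.toRightFun g
  have hgu : g * (u : K)⁻¹ ∈ N := hR.mul_inv_toRightFun_mem g
  calc wLen X g = wLen X (N.subtype ⟨g * (u : K)⁻¹, hgu⟩ * u) := by simp
    _ ≤ wLen X (N.subtype ⟨_, hgu⟩) + wLen X u := wLen_mul_le hXm _ _
    _ ≤ (1 + c * DW (K ⧸ N)) * wLen Y ⟨_, hgu⟩ + DW (K ⧸ N) :=
        add_le_add (wLen_map_le_mul hXm
          (Submonoid.closure_eq_top_of_subgroupClosure_eq_top hY) N.subtype hY_len _)
          (hR_le_DW u u.2)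
    _ ≤ (1 + c * DW (K ⧸ N)) * DW N + DW (K ⧸ N) := by grw [wLen_le_DW hY]
    _ = _ := add_comm _ _

end Diameter

theorem stmt16_general {G : Type*} [Group G] [Finite G] (H : Subgroup G) (n : ℕ)
    [(Subgroup.pi Set.univ fun _ : Fin n => H).Normal] :
    DW (Fin n → G) ≤
      DW ((Fin n → G) ⧸ Subgroup.pi Set.univ fun _ : Fin n => H) +
        (1 + Nat.card G * DW ((Fin n → G) ⧸ Subgroup.pi Set.univ fun _ : Fin n => H)) *
          DW ↥(Subgroup.pi Set.univ fun _ : Fin n => H) := by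
  refine DW_le_of_normal _ fun t => Nat.le_of_dvd Nat.card_pos (orderOf_dvd_of_pow_eq_one ?_)
  funext i
  exact pow_card_eq_one'

theorem stmt16 {G : Type*} [Group G] [Finite G] (H : Subgroup G) [H.Normal]
    (hbot : H ≠ ⊥) (htop : H ≠ ⊤) (n : ℕ) (hn : 1 ≤ n)
    [(Subgroup.pi Set.univ fun _ : Fin n => H).Normal] :
    DW (Fin n → G) ≤
      DW ((Fin n → G) ⧸ Subgroup.pi Set.univ fun _ : Fin n => H) +
        (1 + Nat.card G * DW ((Fin n → G) ⧸ Subgroup.pi Set.univ fun _ : Fin n => H)) *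
          DW ↥(Subgroup.pi Set.univ fun _ : Fin n => H) :=
  stmt16_general H n
end
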